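/- arXiv:1001.1632 — 3 statements merged into one kernel-verified Lean document; each statement's English description precedes it below -/
import Mathlib

section
/- Suppose g : ℝ → ℝ satisfies g(t) ≤ t for all t ≥ T₀ and t − g(t) ∼ (1−c)·t/ln t as t → ∞ (with 0 < c < 1). Then for each fixed k ∈ ℕ, the k-th iterate g^k satisfies g^{k}(t) − g^{k+1}(t) ∼ (1−c)·t/ln t as t → ∞. -/
/-!
Since `t / log t = o(t)`, the hypothesis gives `g(t) ~ t`, hence `g^[k](t) ~ t` and
`log (g^[k] t) ~ log t`. Substituting `s = g^[k](t) → ∞` into the hypothesis then yields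
`g^[k](t) - g^[k+1](t) ~ (1-c) s / log s ~ (1-c) t / log t`.
-/

open Filter Asymptotics Real

theorem isLittleO_mul_div_log_id (a : ℝ) : (fun t => a * t / log t) =o[atTop] id := by
  have hinv : (fun t => (log t)⁻¹) =o[atTop] fun _ => (1 : ℝ) :=
    isLittleO_one_iff ℝ |>.mpr (tendsto_inv_atTop_zero.comp tendsto_log_atTop)
  exact (((isBigO_refl (fun t : ℝ => t) atTop).mul_isLittleO hinv).const_mul_left a).congr
    (fun t => by ring) (fun t => mul_one t)

theorem isEquivalent_id_of_sub_isEquivalent {β : Type*} [NormedAddCommGroup β] {l : Filter β}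
    {g φ : β → β} (h : (id - g) ~[l] φ) (hφ : φ =o[l] id) : g ~[l] id := by
  rw [IsEquivalent, ← neg_sub]
  exact (h.trans_isLittleO hφ).neg_left

theorem iterate_isEquivalent_id {g : ℝ → ℝ} (hg : g ~[atTop] id) (n : ℕ) :
    g^[n] ~[atTop] id := by
  induction n with
  | zero => exact IsEquivalent.refl
  | succ n ih =>
    rw [Function.iterate_succ']
    exact (hg.comp_tendsto (ih.symm.tendsto_atTop tendsto_id)).trans ih

theorem isEquivalent_mul_div_log_comp {f : ℝ → ℝ} (hf : f ~[atTop] id) (a : ℝ) :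
    (fun t => a * f t / log (f t)) ~[atTop] fun t => a * t / log t :=
  (IsEquivalent.refl.mul hf).div (hf.log tendsto_id)

theorem isEquivalent_iterate_sub_iterate_succ {g : ℝ → ℝ} {a : ℝ}
    (hg : (fun t => t - g t) ~[atTop] fun t => a * t / log t) (k : ℕ) :
    (fun t => g^[k] t - g^[k + 1] t) ~[atTop] fun t => a * t / log t := by
  have hk : g^[k] ~[atTop] id :=
    iterate_isEquivalent_id (isEquivalent_id_of_sub_isEquivalent hg
      (isLittleO_mul_div_log_id a)) k
  simp only [Function.iterate_succ_apply']
  exact (hg.comp_tendsto (hk.symm.tendsto_atTop tendsto_id)).trans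
    (isEquivalent_mul_div_log_comp hk a)

theorem stmt3_general (g : ℝ → ℝ) (c : ℝ)
    (hasym : Filter.Tendsto (fun t => (t - g t) / ((1 - c) * t / Real.log t))
      Filter.atTop (nhds 1))
    (k : ℕ) :
    Filter.Tendsto (fun t => (g^[k] t - g^[k + 1] t) / ((1 - c) * t / Real.log t))
      Filter.atTop (nhds 1) := by
  -- `x / 0 = 0`, so a ratio tending to `1` has an eventually nonzero denominator.
  have hne : ∀ᶠ t in atTop, (1 - c) * t / log t ≠ 0 :=
    (hasym.eventually_ne one_ne_zero).mono fun t ht h => ht (by simp [h])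
  exact (isEquivalent_iff_tendsto_one hne).mp
    (isEquivalent_iterate_sub_iterate_succ (isEquivalent_of_tendsto_one hasym) k)

/-- If `g(t) ≤ t` for `t ≥ T₀`, `g` is nondecreasing with `g(t) → ∞`, and
`t − g(t) ∼ (1−c)·t/ln t`, then for each fixed `k`,
`g^[k](t) − g^[k+1](t) ∼ (1−c)·t/ln t` as `t → ∞`. -/
theorem stmt3 (g : ℝ → ℝ) (c : ℝ) (hc0 : 0 < c) (hc1 : c < 1) (T₀ : ℝ)
    (hle : ∀ t ≥ T₀, g t ≤ t)
    (hmono : Monotone g)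
    (htop : Filter.Tendsto g Filter.atTop Filter.atTop)
    (hasym : Filter.Tendsto (fun t => (t - g t) / ((1 - c) * t / Real.log t))
      Filter.atTop (nhds 1))
    (k : ℕ) :
    Filter.Tendsto (fun t => (g^[k] t - g^[k + 1] t) / ((1 - c) * t / Real.log t))
      Filter.atTop (nhds 1) :=
  stmt3_general g c hasym k
end

section
/- Suppose g : ℝ → ℝ is nondecreasing with g(t) ≤ t and t − g(t) = O(t/ln t) as t → ∞. Then for each fixed n ∈ ℕ there exists T₁ such that for all t ≥ T₁, g^{n+1}(t) ≥ t·(1 − (n+2)·C/ln t) ≥ t/2, where C is the implied constant; in particular g^{n+1}(t) → ∞ as t → ∞. -/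
/-!
Where `x ≥ e` the function `x ↦ x / log x` is increasing, so while the iterates of `g` started at
`t` stay in `[t/2, t]` each application of `g` loses at most `D = C t / log t`. After `n + 1`
steps the loss is at most `(n + 1) D ≤ (n + 2) D ≤ t/2` once `log t ≥ 2 (n + 2) C`; this both
keeps the iterates in `[t/2, t]` and gives the stated bound.
-/

open Filter Real

theorem Function.sub_mul_le_iterate {g : ℝ → ℝ} (hle : ∀ x, g x ≤ x) {a t D : ℝ} (hD : 0 ≤ D)
    (hstep : ∀ x ∈ Set.Icc a t, x - D ≤ g x) {k : ℕ} (hk : a ≤ t - k * D) :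
    t - k * D ≤ g^[k] t := by
  induction k with
  | zero => simp
  | succ k ih =>
    push_cast at hk ⊢
    have hiter : t - k * D ≤ g^[k] t := ih (by linarith)
    have hmem : g^[k] t ∈ Set.Icc a t :=
      ⟨by linarith, Function.iterate_le_id_of_le_id hle k t⟩
    rw [Function.iterate_succ_apply']
    linarith [hstep _ hmem]

theorem Real.div_log_le_div_log {x t : ℝ} (hx : exp 1 ≤ x) (hxt : x ≤ t) :
    x / log x ≤ t / log t := by
  have hx0 : 0 < x := (exp_pos 1).trans_le hx
  have hlogx : 0 < log x := one_pos.trans_le ((le_log_iff_exp_le hx0).mpr hx)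
  have hanti := log_div_self_antitoneOn hx (hx.trans hxt) hxt
  rw [← inv_div (log t), ← inv_div (log x)]
  exact inv_anti₀ (div_pos (hlogx.trans_le (log_le_log hx0 hxt)) (hx0.trans_le hxt)) hanti

theorem iterate_ge_of_sub_le_div_log {g : ℝ → ℝ} (hle : ∀ x, g x ≤ x) {C T₀ t : ℝ}
    (hC : 0 ≤ C) (hT₀ : ∀ x ≥ T₀, x - g x ≤ C * x / log x) (n : ℕ)
    (ht : max T₀ (exp 1) ≤ t / 2) (hlog : 2 * ((n : ℝ) + 2) * C ≤ log t) :
    t * (1 - ((n : ℝ) + 2) * C / log t) ≤ g^[n + 1] t ∧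
      t / 2 ≤ t * (1 - ((n : ℝ) + 2) * C / log t) := by
  have ht0 : 0 < t := by linarith [le_max_right T₀ (exp 1), exp_pos 1]
  have hlogt : 0 < log t :=
    one_pos.trans_le ((le_log_iff_exp_le ht0).mpr (by linarith [le_max_right T₀ (exp 1)]))
  set D := C * t / log t
  have hD : 0 ≤ D := by positivity
  have hexpand : t * (1 - ((n : ℝ) + 2) * C / log t) = t - ((n : ℝ) + 2) * D := by
    simp only [D]; ring
  have hhalf : t / 2 ≤ t - ((n : ℝ) + 2) * D := by
    have hratio : ((n : ℝ) + 2) * C / log t ≤ 1 / 2 := by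
      rw [div_le_iff₀ hlogt]; linarith
    have hloss : ((n : ℝ) + 2) * D = t * (((n : ℝ) + 2) * C / log t) := by simp only [D]; ring
    linarith [mul_le_mul_of_nonneg_left hratio ht0.le]
  have hstep : ∀ x ∈ Set.Icc (t / 2) t, x - D ≤ g x := by
    rintro x ⟨hx, hxt⟩
    have hxT₀ : T₀ ≤ x := (le_max_left _ _).trans (ht.trans hx)
    have hxe : exp 1 ≤ x := (le_max_right _ _).trans (ht.trans hx)
    have hloss : C * x / log x ≤ D := by
      simpa only [D, mul_div_assoc] using mul_le_mul_of_nonneg_left (div_log_le_div_log hxe hxt) hC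
    linarith [hT₀ x hxT₀]
  have hiter := Function.sub_mul_le_iterate hle hD hstep (k := n + 1) (by push_cast; linarith)
  push_cast at hiter
  rw [hexpand]
  exact ⟨by linarith, hhalf⟩

theorem stmt4_general (g : ℝ → ℝ) (hle : ∀ t, g t ≤ t)
    (C : ℝ) (hC : 0 < C)
    (hO : ∀ᶠ t in Filter.atTop, t - g t ≤ C * t / Real.log t)
    (n : ℕ) :
    (∃ T₁ : ℝ, ∀ t ≥ T₁,
        t * (1 - ((n : ℝ) + 2) * C / Real.log t) ≤ g^[n + 1] t ∧
        t / 2 ≤ t * (1 - ((n : ℝ) + 2) * C / Real.log t)) ∧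
      Filter.Tendsto (g^[n + 1]) Filter.atTop Filter.atTop := by
  obtain ⟨T₀, hT₀⟩ := eventually_atTop.mp hO
  have hhalf : Tendsto (fun t : ℝ => t / 2) atTop atTop := tendsto_id.atTop_div_const two_pos
  obtain ⟨T₁, hT₁⟩ := eventually_atTop.mp <|
    (hhalf.eventually_ge_atTop (max T₀ (exp 1))).and
      (tendsto_log_atTop.eventually_ge_atTop (2 * ((n : ℝ) + 2) * C))
  have hbound : ∀ t ≥ T₁, _ := fun t ht =>
    iterate_ge_of_sub_le_div_log hle hC.le hT₀ n (hT₁ t ht).1 (hT₁ t ht).2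
  refine ⟨⟨T₁, hbound⟩, tendsto_atTop_mono' _ ?_ hhalf⟩
  filter_upwards [eventually_ge_atTop T₁] with t ht
  exact (hbound t ht).2.trans (hbound t ht).1

/-- If `g` is nondecreasing, `g(t) ≤ t`, and `t − g(t) ≤ C·t/ln t` eventually, then for each
fixed `n` there is `T₁` such that for `t ≥ T₁`,
`g^[n+1](t) ≥ t·(1 − (n+2)·C/ln t) ≥ t/2`; in particular `g^[n+1](t) → ∞`. -/
theorem stmt4 (g : ℝ → ℝ) (hmono : Monotone g) (hle : ∀ t, g t ≤ t)
    (C : ℝ) (hC : 0 < C)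
    (hO : ∀ᶠ t in Filter.atTop, t - g t ≤ C * t / Real.log t)
    (n : ℕ) :
    (∃ T₁ : ℝ, ∀ t ≥ T₁,
        t * (1 - ((n : ℝ) + 2) * C / Real.log t) ≤ g^[n + 1] t ∧
        t / 2 ≤ t * (1 - ((n : ℝ) + 2) * C / Real.log t)) ∧
      Filter.Tendsto (g^[n + 1]) Filter.atTop Filter.atTop :=
  stmt4_general g hle C hC hO n
end

section
/- Suppose g : ℝ → ℝ is nondecreasing with t − g(t) ∼ (1−c)·t/ln t as t → ∞, 0 < c < 1. Then for any fixed ε > 0 and fixed n ∈ ℕ, there exists T₁ such that for all t ≥ T₁: g^{n+1}(t) > t·(1 − (1+ε)(1−c)(n+1)/ln t). -/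
/-!
Write `L = log t`. Each application of `g` lowers `t` by about `(1 - c) t / L`, and along the
first `n + 1` iterates both `t` and `L` change only by factors tending to `1`. So each step
lowers the current value by at most `b t / L` for any fixed `b > 1 - c`, and `n + 1` steps lose at
most `b (n + 1) t / L`; monotonicity of `g` lets the induction work with the lower bounds
instead of the iterates themselves.
-/

open Filter Real Topology

lemma tendsto_one_sub_div_log (K : ℝ) : Tendsto (fun t => 1 - K / log t) atTop (𝓝 1) := by
  simpa using tendsto_const_nhds.sub (tendsto_const_nhds (x := K).div_atTop tendsto_log_atTop)

lemma tendsto_log_mul_div_log {F : ℝ → ℝ} (hF : Tendsto F atTop (𝓝 1)) :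
    Tendsto (fun t => log (t * F t) / log t) atTop (𝓝 1) := by
  have hlogF : Tendsto (fun t => log (F t)) atTop (𝓝 0) := by
    rw [← log_one]
    exact (continuousAt_log one_ne_zero).tendsto.comp hF
  have h := (tendsto_const_nhds (x := (1 : ℝ))).add (hlogF.div_atTop tendsto_log_atTop)
  rw [add_zero] at h
  refine h.congr' ?_
  filter_upwards [hF.eventually (lt_mem_nhds one_pos), eventually_gt_atTop 1] with t hF0 ht
  rw [log_mul (by positivity) hF0.ne', add_div, div_self (log_pos ht).ne']

lemma eventually_mul_div_log_lt (K : ℝ) {a b : ℝ} (hab : a < b) :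
    ∀ᶠ t in atTop, a * (t * (1 - K / log t)) / log (t * (1 - K / log t)) < b * t / log t := by
  have hF := tendsto_one_sub_div_log K
  have hratio : Tendsto (fun t => a * (1 - K / log t) / (log (t * (1 - K / log t)) / log t))
      atTop (𝓝 a) := by
    have h := (hF.const_mul a).div (tendsto_log_mul_div_log hF) one_ne_zero
    rw [mul_one, div_one] at h
    exact h
  filter_upwards [hratio.eventually_lt_const hab, eventually_gt_atTop 1] with t hlt ht
  have hlog : 0 < log t := log_pos ht
  calc a * (t * (1 - K / log t)) / log (t * (1 - K / log t))
      = t / log t * (a * (1 - K / log t) / (log (t * (1 - K / log t)) / log t)) := by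
        field_simp
    _ < t / log t * b := by gcongr
    _ = b * t / log t := by ring

lemma eventually_sub_lt_mul_div_log {g : ℝ → ℝ} {k a : ℝ} (hk : 0 < k)
    (hg : Tendsto (fun t => (t - g t) / (k * t / log t)) atTop (𝓝 1)) (ha : k < a) :
    ∀ᶠ t in atTop, t - g t < a * t / log t := by
  filter_upwards [hg.eventually_lt_const ((one_lt_div hk).2 ha), eventually_gt_atTop 1]
    with t hlt ht
  have hpos : 0 < k * t / log t := by have := log_pos ht; positivity
  calc t - g t < a / k * (k * t / log t) := (div_lt_iff₀ hpos).1 hlt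
    _ = a * t / log t := by field_simp

section Iterates

variable {g : ℝ → ℝ} {a b : ℝ} (hmono : Monotone g)
  (hg : ∀ᶠ t in atTop, t - g t < a * t / log t) (hab : a < b)
include hmono hg hab

lemma eventually_lt_comp_of_le {f : ℝ → ℝ} {m : ℝ}
    (hf : ∀ᶠ t in atTop, t * (1 - b * m / log t) ≤ f t) :
    ∀ᶠ t in atTop, t * (1 - b * (m + 1) / log t) < g (f t) := by
  have hs : Tendsto (fun t => t * (1 - b * m / log t)) atTop atTop :=
    tendsto_id.atTop_mul_pos one_pos (tendsto_one_sub_div_log _)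
  filter_upwards [hf, hs.eventually hg, eventually_mul_div_log_lt (b * m) hab]
    with t hft hgs hsmall
  calc t * (1 - b * (m + 1) / log t) = t * (1 - b * m / log t) - b * t / log t := by ring
    _ < g (f t) := by linarith [hmono hft]

lemma eventually_lt_iterate_succ (n : ℕ) :
    ∀ᶠ t in atTop, t * (1 - b * ((n : ℝ) + 1) / log t) < g^[n + 1] t := by
  induction n with
  | zero =>
    simpa using eventually_lt_comp_of_le (m := 0) (f := id) hmono hg hab (by simp)
  | succ n ih =>
    rw [Function.iterate_succ']
    exact_mod_cast eventually_lt_comp_of_le hmono hg hab (ih.mono fun _ => le_of_lt)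

end Iterates

theorem stmt15_general (g : ℝ → ℝ) (hmono : Monotone g) (c : ℝ) (hc1 : c < 1)
    (hasym : Filter.Tendsto (fun t => (t - g t) / ((1 - c) * t / Real.log t))
      Filter.atTop (nhds 1))
    (ε : ℝ) (hε : 0 < ε) (n : ℕ) :
    ∃ T₁ : ℝ, ∀ t ≥ T₁,
      t * (1 - (1 + ε) * (1 - c) * ((n : ℝ) + 1) / Real.log t) < g^[n + 1] t := by
  have hk : 0 < 1 - c := sub_pos.2 hc1
  obtain ⟨a, hka, hab⟩ := exists_between (lt_mul_of_one_lt_left hk (lt_add_of_pos_right 1 hε))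
  exact eventually_atTop.mp <|
    eventually_lt_iterate_succ hmono (eventually_sub_lt_mul_div_log hk hasym hka) hab n

/-- Quantitative lower bound for iterates: if `g` is nondecreasing and
`t − g(t) ∼ (1−c)·t/ln t`, then for any `ε > 0` and fixed `n`, eventually
`g^[n+1](t) > t·(1 − (1+ε)(1−c)(n+1)/ln t)`. -/
theorem stmt15 (g : ℝ → ℝ) (hmono : Monotone g) (c : ℝ) (hc0 : 0 < c) (hc1 : c < 1)
    (hasym : Filter.Tendsto (fun t => (t - g t) / ((1 - c) * t / Real.log t))
      Filter.atTop (nhds 1))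
    (ε : ℝ) (hε : 0 < ε) (n : ℕ) :
    ∃ T₁ : ℝ, ∀ t ≥ T₁,
      t * (1 - (1 + ε) * (1 - c) * ((n : ℝ) + 1) / Real.log t) < g^[n + 1] t :=
  stmt15_general g hmono c hc1 hasym ε hε n
end
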